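/- arXiv:1203.3836 — 3 statements merged into one kernel-verified Lean document; each statement's English description precedes it below -/
import Mathlib

section
/- Let (Γ, α, θ, λ) be a 3-independent 1-skeleton in ℝ^n. Then every 2-valent subskeleton of (Γ, α, θ, λ) — in particular every 2-face, when a polarizing covector exists — is level. -/
open SimpleGraph

universe u u' v

variable {V : Type u}

/-- The type of connections on a graph: for each oriented edge (given by an adjacency proof),
a bijection between the neighbor set of the initial vertex and that of the terminal vertex. -/
abbrev GraphConn {V : Type u} (G : SimpleGraph V) : Type u :=
  ∀ ⦃p q : V⦄, G.Adj p q → (↥(G.neighborSet p) ≃ ↥(G.neighborSet q))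

/-- The type of compatibility systems: for each oriented edge, a real-valued function on the
oriented edges at the initial vertex. -/
abbrev CompatSys {V : Type u} (G : SimpleGraph V) : Type u :=
  ∀ ⦃p q : V⦄, G.Adj p q → (↥(G.neighborSet p) → ℝ)

/-- The type of (generalized) axial functions with values in `W`. -/
abbrev AxialFn {V : Type u} (G : SimpleGraph V) (W : Type v) : Type (max u v) :=
  ∀ ⦃p q : V⦄, G.Adj p q → W

/-- The `G`-adjacency underlying an element of a neighbor set. -/
def nadj {G : SimpleGraph V} {p : V} (e : ↥(G.neighborSet p)) : G.Adj p ↑e := e.2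

/-- `θ` is a connection: `θ_e e = ē` and `θ_{ē} = θ_e⁻¹`. -/
def IsConnection (G : SimpleGraph V) (θ : GraphConn G) : Prop :=
  (∀ ⦃p q : V⦄ (h : G.Adj p q), θ h ⟨q, h⟩ = ⟨p, h.symm⟩) ∧
  (∀ ⦃p q : V⦄ (h : G.Adj p q), θ h.symm = (θ h).symm)

/-- `lam` is a compatibility system for `(G, θ)`: positive values with
`λ_{ē}(θ_e e') = 1 / λ_e(e')`. -/
def IsCompatSystem (G : SimpleGraph V) (θ : GraphConn G) (lam : CompatSys G) : Prop :=
  (∀ ⦃p q : V⦄ (h : G.Adj p q) (e : ↥(G.neighborSet p)), 0 < lam h e) ∧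
  (∀ ⦃p q : V⦄ (h : G.Adj p q) (e : ↥(G.neighborSet p)),
      lam h.symm (θ h e) = (lam h e)⁻¹)

section Axial

variable {W : Type v} [AddCommGroup W] [Module ℝ W]

/-- `α` is a generalized axial function for `(G, θ, λ)`: (gA1) `α(e) = -m_e • α(ē)` for some
`m_e > 0`, and (gA2) `α(e') - λ_e(e') • α(θ_e(e'))` is a scalar multiple of `α(e)` for `e' ≠ e`
at the initial vertex of `e`. -/
def IsGenAxial (G : SimpleGraph V) (θ : GraphConn G) (lam : CompatSys G)
    (α : AxialFn G W) : Prop :=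
  (∀ ⦃p q : V⦄ (h : G.Adj p q), ∃ m : ℝ, 0 < m ∧ α h = -(m • α h.symm)) ∧
  (∀ ⦃p q : V⦄ (h : G.Adj p q) (e : ↥(G.neighborSet p)), (↑e : V) ≠ q →
      ∃ c : ℝ, α (nadj e) - lam h e • α (nadj (θ h e)) = c • α h)

/-- The quadruple `(G, θ, λ, α)` is a generalized 1-skeleton (on a connected graph). -/
structure IsGenSkeleton (G : SimpleGraph V) (θ : GraphConn G) (lam : CompatSys G)
    (α : AxialFn G W) : Prop where
  connected : G.Connected
  conn : IsConnection G θ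
  compat : IsCompatSystem G θ lam
  axial : IsGenAxial G θ lam α

/-- The extra axioms making a generalized 1-skeleton an honest 1-skeleton:
`α(ē) = -α(e)` and pairwise linear independence at each vertex. -/
def IsSkeletal (G : SimpleGraph V) (α : AxialFn G W) : Prop :=
  (∀ ⦃p q : V⦄ (h : G.Adj p q), α h.symm = -α h) ∧
  (∀ (p : V) (e e' : ↥(G.neighborSet p)), e ≠ e' →
      LinearIndependent ℝ ![α (nadj e), α (nadj e')])

/-- `(G, θ, λ, α)` is a 1-skeleton. -/
def IsOneSkeleton (G : SimpleGraph V) (θ : GraphConn G) (lam : CompatSys G)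
    (α : AxialFn G W) : Prop :=
  IsGenSkeleton G θ lam α ∧ IsSkeletal G α

/-- `G` is `d`-valent. -/
def Valency (G : SimpleGraph V) (d : ℕ) : Prop :=
  ∀ p : V, (G.neighborSet p).ncard = d

/-- `α` is `k`-independent. -/
def kIndep (G : SimpleGraph V) (α : AxialFn G W) (k : ℕ) : Prop :=
  ∀ (p : V) (s : Finset ↥(G.neighborSet p)), s.card = k →
    LinearIndependent ℝ (fun e : ↥(↑s : Set ↥(G.neighborSet p)) => α (nadj (e : ↥(G.neighborSet p))))

/-- `α` is effective: the axial vectors at each vertex span the target space. -/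
def EffectiveAxial (G : SimpleGraph V) (α : AxialFn G W) : Prop :=
  ∀ p : V, Submodule.span ℝ (Set.range fun e : ↥(G.neighborSet p) => α (nadj e)) = ⊤

/-- A covector is generic if it pairs nonzero with each axial vector. -/
def GenericCovec (G : SimpleGraph V) (α : AxialFn G W) (ξ : W →ₗ[ℝ] ℝ) : Prop :=
  ∀ ⦃p q : V⦄ (h : G.Adj p q), ξ (α h) ≠ 0

/-- The directed-edge relation induced by a covector. -/
def dirRel (G : SimpleGraph V) (α : AxialFn G W) (ξ : W →ₗ[ℝ] ℝ) : V → V → Prop :=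
  fun p q => ∃ h : G.Adj p q, 0 < ξ (α h)

/-- A generic covector is polarizing if the induced orientation has no directed cycles. -/
def PolarizingCovec (G : SimpleGraph V) (α : AxialFn G W) (ξ : W →ₗ[ℝ] ℝ) : Prop :=
  GenericCovec G α ξ ∧ ∀ p : V, ¬ Relation.TransGen (dirRel G α ξ) p p

/-- A Morse function compatible with a (polarizing) covector. -/
def MorseCompat (G : SimpleGraph V) (α : AxialFn G W) (ξ : W →ₗ[ℝ] ℝ) (φ : V → ℝ) : Prop :=
  Function.Injective φ ∧ ∀ ⦃p q : V⦄ (h : G.Adj p q), 0 < ξ (α h) → φ p < φ q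

/-- An embedding of a 1-skeleton. -/
def IsSkelEmbedding (G : SimpleGraph V) (α : AxialFn G W) (f : V → W) : Prop :=
  ∀ ⦃p q : V⦄ (h : G.Adj p q), ∃ c : ℝ, 0 < c ∧ f q - f p = c • α h

end Axial
section Sub

variable {W : Type v} [AddCommGroup W] [Module ℝ W]

/-- Transport of oriented edges along a walk, via the connection. -/
def transport {G : SimpleGraph V} (θ : GraphConn G) :
    ∀ {p q : V}, G.Walk p q → ↥(G.neighborSet p) → ↥(G.neighborSet q)
  | _, _, SimpleGraph.Walk.nil, e => e
  | _, _, SimpleGraph.Walk.cons h w, e => transport θ w (θ h e)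

/-- The local path-connection number of an oriented edge along a walk. -/
def transNum {G : SimpleGraph V} (θ : GraphConn G) (lam : CompatSys G) :
    ∀ {p q : V}, G.Walk p q → ↥(G.neighborSet p) → ℝ
  | _, _, SimpleGraph.Walk.nil, _ => 1
  | _, _, SimpleGraph.Walk.cons h w, e => lam h e * transNum θ lam w (θ h e)

/-- A walk of `G` lies in the subgraph `H` if all its darts are edges of `H`. -/
def WalkIn {G : SimpleGraph V} (H : G.Subgraph) {p q : V} (w : G.Walk p q) : Prop :=
  ∀ d ∈ w.darts, H.Adj d.toProd.1 d.toProd.2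

/-- A subskeleton: a connected regular totally geodesic subgraph. -/
structure IsSubskeleton {G : SimpleGraph V} (θ : GraphConn G) (H : G.Subgraph) : Prop where
  connected : H.Connected
  regular : ∃ k : ℕ, ∀ p ∈ H.verts, (H.neighborSet p).ncard = k
  geodesic : ∀ ⦃p q : V⦄ (h : H.Adj p q) (e : ↥(G.neighborSet p)),
      H.Adj p ↑e → H.Adj q ↑(θ (H.adj_sub h) e)

/-- The subskeleton `H` has trivial normal holonomy. -/
def TrivialNormalHolonomy {G : SimpleGraph V} (θ : GraphConn G) (H : G.Subgraph) : Prop :=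
  ∀ (p : V) (w : G.Walk p p), WalkIn H w →
    ∀ e : ↥(G.neighborSet p), ¬ H.Adj p ↑e → transport θ w e = e

/-- The subskeleton `H` is level. -/
def LevelSub {G : SimpleGraph V} (θ : GraphConn G) (lam : CompatSys G)
    (H : G.Subgraph) : Prop :=
  ∀ (p : V) (w : G.Walk p p), WalkIn H w →
    ∀ e : ↥(G.neighborSet p), ¬ H.Adj p ↑e → transport θ w e = e →
      transNum θ lam w e = 1

/-- The index of a vertex of a subgraph with respect to a covector. -/
noncomputable def subIndex {G : SimpleGraph V} (α : AxialFn G W) (ξ : W →ₗ[ℝ] ℝ)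
    (H : G.Subgraph) (p : V) : ℕ :=
  {q : V | ∃ h : H.Adj p q, ξ (α (H.adj_sub h)) < 0}.ncard

/-- `b₀` of a subgraph with respect to a covector: the number of index-zero vertices. -/
noncomputable def subB0 {G : SimpleGraph V} (α : AxialFn G W) (ξ : W →ₗ[ℝ] ℝ)
    (H : G.Subgraph) : ℕ :=
  {p : V | p ∈ H.verts ∧ subIndex α ξ H p = 0}.ncard

/-- A 2-face: a 2-valent subskeleton with `b₀ = 1` (computed with the covector `ξ`). -/
def IsTwoFace {G : SimpleGraph V} (θ : GraphConn G) (α : AxialFn G W) (ξ : W →ₗ[ℝ] ℝ)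
    (H : G.Subgraph) : Prop :=
  IsSubskeleton θ H ∧ (∀ p ∈ H.verts, (H.neighborSet p).ncard = 2) ∧ subB0 α ξ H = 1

/-- Enough 2-faces: any two distinct oriented edges at a vertex lie on a unique 2-face. -/
def EnoughTwoFaces (G : SimpleGraph V) (θ : GraphConn G) (α : AxialFn G W)
    (ξ : W →ₗ[ℝ] ℝ) : Prop :=
  ∀ (p : V) (e e' : ↥(G.neighborSet p)), e ≠ e' →
    ∃! H : G.Subgraph, IsTwoFace θ α ξ H ∧ H.Adj p ↑e ∧ H.Adj p ↑e'

/-- A 1-skeleton is reducible if it admits a polarizing covector and has enough 2-faces. -/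
def ReducibleSkel (G : SimpleGraph V) (θ : GraphConn G) (α : AxialFn G W) : Prop :=
  ∃ ξ : W →ₗ[ℝ] ℝ, PolarizingCovec G α ξ ∧ EnoughTwoFaces G θ α ξ

/-- A total lift: an effective generalized axial function `A` for the same `(G, θ, λ)` with
values in `ℝ^d` (`d` the valency), together with a surjective linear map `L` with `α = L ∘ A`. -/
def HasTotalLift (G : SimpleGraph V) (θ : GraphConn G) (lam : CompatSys G)
    (α : AxialFn G W) (d : ℕ) : Prop :=
  ∃ A : AxialFn G (Fin d → ℝ),
    IsGenAxial G θ lam A ∧ EffectiveAxial G A ∧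
    ∃ L : (Fin d → ℝ) →ₗ[ℝ] W, Function.Surjective L ∧
      ∀ ⦃p q : V⦄ (h : G.Adj p q), α h = L (A h)

/-- Equivalence of generalized 1-skeleta on the same graph-connection pair. -/
def EquivGenSkel (G : SimpleGraph V) (θ : GraphConn G) (lam lam' : CompatSys G)
    (α α' : AxialFn G W) : Prop :=
  ∃ κ : ∀ ⦃p q : V⦄, G.Adj p q → ℝ,
    (∀ ⦃p q : V⦄ (h : G.Adj p q), 0 < κ h) ∧
    (∀ ⦃p q : V⦄ (h : G.Adj p q), α h = κ h • α' h) ∧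
    (∀ ⦃p q : V⦄ (h : G.Adj p q) (e : ↥(G.neighborSet p)),
        lam h e = (κ (nadj e) / κ (nadj (θ h e))) * lam' h e)

/-- The graph whose edges are the edges of `G` with axial vector in the subspace `Hs`. -/
def sliceGraph (G : SimpleGraph V) (α : AxialFn G W) (Hs : Submodule ℝ W) :
    SimpleGraph V where
  Adj p q := ∃ h : G.Adj p q, α h ∈ Hs ∧ α h.symm ∈ Hs
  symm := by
    constructor
    intro p q ⟨h, h1, h2⟩
    exact ⟨h.symm, h2, h1⟩
  loopless := by
    constructor
    intro p ⟨h, _⟩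
    exact G.loopless.irrefl p h

/-- The connected component of `v` in the slice graph, as a subgraph of `G`. -/
def sliceComponent (G : SimpleGraph V) (α : AxialFn G W) (Hs : Submodule ℝ W) (v : V) :
    G.Subgraph where
  verts := {w : V | (sliceGraph G α Hs).Reachable v w}
  Adj p q := (sliceGraph G α Hs).Adj p q ∧ (sliceGraph G α Hs).Reachable v p ∧
    (sliceGraph G α Hs).Reachable v q
  adj_sub := fun h => h.1.1
  edge_vert := fun h => h.2.1
  symm := ⟨fun p q h => ⟨h.1.symm, h.2.2, h.2.1⟩⟩

/-- Pointedness of a subgraph (e.g. a slice): for every covector nonvanishing on its edges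
there is a unique source vertex. -/
def SubPointed {G : SimpleGraph V} (α : AxialFn G W) (H : G.Subgraph) : Prop :=
  ∀ ξ : W →ₗ[ℝ] ℝ, (∀ ⦃p q : V⦄ (h : H.Adj p q), ξ (α (H.adj_sub h)) ≠ 0) →
    ∃! p : V, p ∈ H.verts ∧ ∀ ⦃q : V⦄ (h : H.Adj p q), 0 < ξ (α (H.adj_sub h))

/-- Pointedness of the whole skeleton: for every generic covector there is a unique source. -/
def PointedSkel (G : SimpleGraph V) (α : AxialFn G W) : Prop :=
  ∀ ξ : W →ₗ[ℝ] ℝ, GenericCovec G α ξ →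
    ∃! p : V, ∀ ⦃q : V⦄ (h : G.Adj p q), 0 < ξ (α h)

/-- A 3-independent 1-skeleton is noncyclic if it admits a polarizing covector and every
2-slice is pointed. -/
def Noncyclic (G : SimpleGraph V) (α : AxialFn G W) : Prop :=
  kIndep G α 3 ∧ (∃ ξ : W →ₗ[ℝ] ℝ, PolarizingCovec G α ξ) ∧
  ∀ (Hs : Submodule ℝ W), Module.finrank ℝ ↥Hs = 2 → ∀ v : V,
    SubPointed α (sliceComponent G α Hs v)

/-- A `d`-valent `d`-independent 1-skeleton is toral if every slice is pointed. -/
def Toral (G : SimpleGraph V) (α : AxialFn G W) : Prop :=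
  ∀ (Hs : Submodule ℝ W) (v : V), SubPointed α (sliceComponent G α Hs v)

end Sub
section CrossSection

variable {Vc : Type u'} {W : Type v} [AddCommGroup W] [Module ℝ W]

/-- Specification of the *down* `c`-cross-section of a reducible 1-skeleton `(G, θ, λ, α)`
with polarizing covector `ξ`, compatible Morse function `φ`, and regular value `c`.
`νm` identifies the vertices of the cross-section graph `Gc` with the oriented edges of `G`
at `c`-level; `face` assigns to each oriented edge of `Gc` the corresponding 2-face of `G`
at `c`-level; `θc`, `λc`, `αc` are the down connection, down compatibility system and down
axial function, characterized by normal transport along lower paths. -/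
structure IsDownCrossSection (G : SimpleGraph V) (θ : GraphConn G) (lam : CompatSys G)
    (α : AxialFn G W) (ξ : W →ₗ[ℝ] ℝ) (φ : V → ℝ) (c : ℝ)
    (Gc : SimpleGraph Vc) (νm : Vc → V × V) (θc : GraphConn Gc) (lamc : CompatSys Gc)
    (αc : AxialFn Gc ↥(LinearMap.ker ξ))
    (face : ∀ ⦃x y : Vc⦄, Gc.Adj x y → G.Subgraph) : Prop where
  nu_inj : Function.Injective νm
  nu_level : ∀ x : Vc, ∃ _ : G.Adj (νm x).1 (νm x).2, φ (νm x).1 < c ∧ c < φ (νm x).2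
  nu_surj : ∀ ⦃p q : V⦄, G.Adj p q → φ p < c → c < φ q → ∃ x : Vc, νm x = (p, q)
  conn_c : IsConnection Gc θc
  compat_c : IsCompatSystem Gc θc lamc
  face_two : ∀ ⦃x y : Vc⦄ (h : Gc.Adj x y), IsTwoFace θ α ξ (face h)
  face_symm : ∀ ⦃x y : Vc⦄ (h : Gc.Adj x y), face h.symm = face h
  face_init : ∀ ⦃x y : Vc⦄ (h : Gc.Adj x y), (face h).Adj (νm x).1 (νm x).2
  face_inj : ∀ ⦃x y y' : Vc⦄ (h : Gc.Adj x y) (h' : Gc.Adj x y'), face h = face h' → y = y'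
  face_surj : ∀ Q : G.Subgraph, IsTwoFace θ α ξ Q →
      ∀ ⦃p q : V⦄, Q.Adj p q → φ p < c → c < φ q →
        ∃ (x y : Vc) (h : Gc.Adj x y), νm x = (p, q) ∧ face h = Q
  conn_spec : ∀ ⦃x y : Vc⦄ (h : Gc.Adj x y) (x' : ↥(Gc.neighborSet x)), (↑x' : Vc) ≠ y →
      ∀ e : ↥(G.neighborSet (νm x).1),
        (face (nadj x')).Adj (νm x).1 ↑e → (↑e : V) ≠ (νm x).2 →
      ∀ e' : ↥(G.neighborSet (νm y).1),
        (face (nadj (θc h x'))).Adj (νm y).1 ↑e' → (↑e' : V) ≠ (νm y).2 →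
      ∀ (wlk : G.Walk (νm x).1 (νm y).1), WalkIn (face h) wlk →
        (∀ z ∈ wlk.support, φ z < c) →
        transport θ wlk e = e'
  lam_spec : ∀ ⦃x y : Vc⦄ (h : Gc.Adj x y) (x' : ↥(Gc.neighborSet x)), (↑x' : Vc) ≠ y →
      ∀ e : ↥(G.neighborSet (νm x).1),
        (face (nadj x')).Adj (νm x).1 ↑e → (↑e : V) ≠ (νm x).2 →
      ∀ (wlk : G.Walk (νm x).1 (νm y).1), WalkIn (face h) wlk →
        (∀ z ∈ wlk.support, φ z < c) →
        transNum θ lam wlk e = lamc h x'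
  alpha_spec : ∀ ⦃x y : Vc⦄ (h : Gc.Adj x y) (hpq : G.Adj (νm x).1 (νm x).2)
      (e : ↥(G.neighborSet (νm x).1)),
      (face h).Adj (νm x).1 ↑e → (↑e : V) ≠ (νm x).2 →
      (↑(αc h) : W) = α (nadj e) - (ξ (α (nadj e)) / ξ (α hpq)) • α hpq

/-- Specification of the *up* `c`-cross-section; as `IsDownCrossSection`, but using normal
transport along upper paths and the up axial function. -/
structure IsUpCrossSection (G : SimpleGraph V) (θ : GraphConn G) (lam : CompatSys G)
    (α : AxialFn G W) (ξ : W →ₗ[ℝ] ℝ) (φ : V → ℝ) (c : ℝ)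
    (Gc : SimpleGraph Vc) (νm : Vc → V × V) (θc : GraphConn Gc) (lamc : CompatSys Gc)
    (αc : AxialFn Gc ↥(LinearMap.ker ξ))
    (face : ∀ ⦃x y : Vc⦄, Gc.Adj x y → G.Subgraph) : Prop where
  nu_inj : Function.Injective νm
  nu_level : ∀ x : Vc, ∃ _ : G.Adj (νm x).1 (νm x).2, φ (νm x).1 < c ∧ c < φ (νm x).2
  nu_surj : ∀ ⦃p q : V⦄, G.Adj p q → φ p < c → c < φ q → ∃ x : Vc, νm x = (p, q)
  conn_c : IsConnection Gc θc
  compat_c : IsCompatSystem Gc θc lamc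
  face_two : ∀ ⦃x y : Vc⦄ (h : Gc.Adj x y), IsTwoFace θ α ξ (face h)
  face_symm : ∀ ⦃x y : Vc⦄ (h : Gc.Adj x y), face h.symm = face h
  face_init : ∀ ⦃x y : Vc⦄ (h : Gc.Adj x y), (face h).Adj (νm x).1 (νm x).2
  face_inj : ∀ ⦃x y y' : Vc⦄ (h : Gc.Adj x y) (h' : Gc.Adj x y'), face h = face h' → y = y'
  face_surj : ∀ Q : G.Subgraph, IsTwoFace θ α ξ Q →
      ∀ ⦃p q : V⦄, Q.Adj p q → φ p < c → c < φ q →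
        ∃ (x y : Vc) (h : Gc.Adj x y), νm x = (p, q) ∧ face h = Q
  conn_spec : ∀ ⦃x y : Vc⦄ (h : Gc.Adj x y) (x' : ↥(Gc.neighborSet x)), (↑x' : Vc) ≠ y →
      ∀ e : ↥(G.neighborSet (νm x).2),
        (face (nadj x')).Adj (νm x).2 ↑e → (↑e : V) ≠ (νm x).1 →
      ∀ e' : ↥(G.neighborSet (νm y).2),
        (face (nadj (θc h x'))).Adj (νm y).2 ↑e' → (↑e' : V) ≠ (νm y).1 →
      ∀ (wlk : G.Walk (νm x).2 (νm y).2), WalkIn (face h) wlk →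
        (∀ z ∈ wlk.support, c < φ z) →
        transport θ wlk e = e'
  lam_spec : ∀ ⦃x y : Vc⦄ (h : Gc.Adj x y) (x' : ↥(Gc.neighborSet x)), (↑x' : Vc) ≠ y →
      ∀ e : ↥(G.neighborSet (νm x).2),
        (face (nadj x')).Adj (νm x).2 ↑e → (↑e : V) ≠ (νm x).1 →
      ∀ (wlk : G.Walk (νm x).2 (νm y).2), WalkIn (face h) wlk →
        (∀ z ∈ wlk.support, c < φ z) →
        transNum θ lam wlk e = lamc h x'
  alpha_spec : ∀ ⦃x y : Vc⦄ (h : Gc.Adj x y) (hpq : G.Adj (νm x).1 (νm x).2)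
      (e : ↥(G.neighborSet (νm x).2)),
      (face h).Adj (νm x).2 ↑e → (↑e : V) ≠ (νm x).1 →
      (↑(αc h) : W) = α (nadj e) - (ξ (α (nadj e)) / ξ (α hpq.symm)) • α hpq.symm

end CrossSection
section BlowUp

variable {V' : Type u'} {W : Type v} [AddCommGroup W] [Module ℝ W]

/-- A blow-up system for the subskeleton `H`: positive scalars on the normal edges with
`n(e') = λ_e(e') · n(θ_e(e'))` along edges of `H`. -/
def IsBlowUpSystem {G : SimpleGraph V} (θ : GraphConn G) (lam : CompatSys G)
    (H : G.Subgraph) (n : ∀ p : V, ↥(G.neighborSet p) → ℝ) : Prop :=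
  (∀ p ∈ H.verts, ∀ e : ↥(G.neighborSet p), ¬ H.Adj p ↑e → 0 < n p e) ∧
  (∀ ⦃p q : V⦄ (h : H.Adj p q) (e : ↥(G.neighborSet p)), ¬ H.Adj p ↑e →
      n p e = lam (H.adj_sub h) e * n q (θ (H.adj_sub h) e))

/-- No normal edge of `H` has its terminal vertex in `H`. -/
def NoChord {G : SimpleGraph V} (H : G.Subgraph) : Prop :=
  ∀ p ∈ H.verts, ∀ e : ↥(G.neighborSet p), ¬ H.Adj p ↑e → (↑e : V) ∉ H.verts

/-- Specification of the blow-up `(G', θ', λ', α')` of the generalized 1-skeleton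
`(G, θ, λ, α)` along the subskeleton `H`, with respect to the blow-up system `n`.
`β` is the blow-down map on vertices and `z p e` is the singular-locus vertex `z^p_e`
(for `p ∈ H.verts` and `e` normal to `H` at `p`). -/
structure IsBlowUp (G : SimpleGraph V) (θ : GraphConn G) (lam : CompatSys G)
    (α : AxialFn G W) (H : G.Subgraph) (n : ∀ p : V, ↥(G.neighborSet p) → ℝ)
    (G' : SimpleGraph V') (θ' : GraphConn G') (lam' : CompatSys G') (α' : AxialFn G' W)
    (β : V' → V) (z : ∀ p : V, ↥(G.neighborSet p) → V') : Prop where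
  conn' : IsConnection G' θ'
  compat' : IsCompatSystem G' θ' lam'
  beta_z : ∀ p ∈ H.verts, ∀ e : ↥(G.neighborSet p), ¬ H.Adj p ↑e → β (z p e) = p
  z_inj : ∀ ⦃p p' : V⦄, p ∈ H.verts → p' ∈ H.verts →
      ∀ ⦃e : ↥(G.neighborSet p)⦄ ⦃e' : ↥(G.neighborSet p')⦄,
        ¬ H.Adj p ↑e → ¬ H.Adj p' ↑e' → z p e = z p' e' → p = p' ∧ (↑e : V) = ↑e'
  sing_surj : ∀ x' : V', β x' ∈ H.verts →
      ∃ (p : V) (_ : p ∈ H.verts) (e : ↥(G.neighborSet p)), ¬ H.Adj p ↑e ∧ x' = z p e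
  beta_inj : ∀ ⦃x' y' : V'⦄, β x' = β y' → β x' ∉ H.verts → x' = y'
  beta_surj : ∀ x : V, x ∉ H.verts → ∃ x' : V', β x' = x
  adj_iff : ∀ x' y' : V', G'.Adj x' y' ↔
      ((β x' ∉ H.verts ∧ β y' ∉ H.verts ∧ G.Adj (β x') (β y')) ∨
       (∃ (p : V) (_ : p ∈ H.verts) (e : ↥(G.neighborSet p)) (_ : ¬ H.Adj p ↑e),
          (x' = z p e ∧ β y' = ↑e ∧ β y' ∉ H.verts) ∨
          (y' = z p e ∧ β x' = ↑e ∧ β x' ∉ H.verts)) ∨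
       (∃ (p : V) (_ : p ∈ H.verts) (e e' : ↥(G.neighborSet p))
          (_ : ¬ H.Adj p ↑e) (_ : ¬ H.Adj p ↑e'),
          (↑e : V) ≠ ↑e' ∧ x' = z p e ∧ y' = z p e') ∨
       (∃ (p q : V) (hpq : H.Adj p q) (e : ↥(G.neighborSet p)) (_ : ¬ H.Adj p ↑e),
          x' = z p e ∧ y' = z q (θ (H.adj_sub hpq) e)))
  proj_adj : ∀ ⦃x' w' : V'⦄, G'.Adj x' w' → β x' ∉ H.verts → G.Adj (β x') (β w')
  -- axial function
  alpha_ns : ∀ ⦃x' y' : V'⦄ (h' : G'.Adj x' y'), β x' ∉ H.verts →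
      ∀ (h : G.Adj (β x') (β y')), α' h' = α h
  alpha_t : ∀ ⦃p : V⦄, p ∈ H.verts → ∀ (e : ↥(G.neighborSet p)), ¬ H.Adj p ↑e →
      ∀ ⦃y' : V'⦄ (h' : G'.Adj (z p e) y'), β y' = ↑e →
        α' h' = (n p e)⁻¹ • α (nadj e)
  alpha_h : ∀ ⦃p q : V⦄ (hpq : H.Adj p q) (e : ↥(G.neighborSet p)), ¬ H.Adj p ↑e →
      ∀ (h' : G'.Adj (z p e) (z q (θ (H.adj_sub hpq) e))), α' h' = α (H.adj_sub hpq)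
  alpha_v : ∀ ⦃p : V⦄, p ∈ H.verts →
      ∀ (e e' : ↥(G.neighborSet p)), ¬ H.Adj p ↑e → ¬ H.Adj p ↑e' → (↑e : V) ≠ ↑e' →
      ∀ (h' : G'.Adj (z p e) (z p e')),
        α' h' = α (nadj e') - (n p e' / n p e) • α (nadj e)
  -- connection, on edges not issuing from the singular locus
  conn_ns : ∀ ⦃x' y' : V'⦄ (h' : G'.Adj x' y'), β x' ∉ H.verts → β y' ∉ H.verts →
      ∀ (h : G.Adj (β x') (β y')) (w' : ↥(G'.neighborSet x')) (w : ↥(G.neighborSet (β x'))),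
        (↑w : V) = β ↑w' → β ↑(θ' h' w') = ↑(θ h w)
  -- connection along `z^p_e → t(e)`
  conn_t_v : ∀ ⦃p : V⦄, p ∈ H.verts → ∀ (e : ↥(G.neighborSet p)), ¬ H.Adj p ↑e →
      ∀ ⦃y' : V'⦄ (h' : G'.Adj (z p e) y'), β y' = ↑e →
      ∀ (e'' : ↥(G.neighborSet p)), ¬ H.Adj p ↑e'' → (↑e'' : V) ≠ ↑e →
      ∀ (w' : ↥(G'.neighborSet (z p e))), (↑w' : V') = z p e'' →
        β ↑(θ' h' w') = ↑(θ (nadj e) e'')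
  conn_t_h : ∀ ⦃p : V⦄, p ∈ H.verts → ∀ (e : ↥(G.neighborSet p)), ¬ H.Adj p ↑e →
      ∀ ⦃y' : V'⦄ (h' : G'.Adj (z p e) y'), β y' = ↑e →
      ∀ ⦃r : V⦄ (hpr : H.Adj p r)
        (w' : ↥(G'.neighborSet (z p e))), (↑w' : V') = z r (θ (H.adj_sub hpr) e) →
      ∀ (rr : ↥(G.neighborSet p)), (↑rr : V) = r →
        β ↑(θ' h' w') = ↑(θ (nadj e) rr)
  -- connection along a horizontal edge `z^p_e → z^q_f`
  conn_h_t : ∀ ⦃p q : V⦄ (hpq : H.Adj p q) (e : ↥(G.neighborSet p)), ¬ H.Adj p ↑e →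
      ∀ (h' : G'.Adj (z p e) (z q (θ (H.adj_sub hpq) e)))
        (w' : ↥(G'.neighborSet (z p e))), β ↑w' = ↑e →
        β ↑(θ' h' w') = ↑(θ (H.adj_sub hpq) e)
  conn_h_v : ∀ ⦃p q : V⦄ (hpq : H.Adj p q) (e : ↥(G.neighborSet p)), ¬ H.Adj p ↑e →
      ∀ (h' : G'.Adj (z p e) (z q (θ (H.adj_sub hpq) e)))
        (e'' : ↥(G.neighborSet p)), ¬ H.Adj p ↑e'' → (↑e'' : V) ≠ ↑e →
      ∀ (w' : ↥(G'.neighborSet (z p e))), (↑w' : V') = z p e'' →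
        (↑(θ' h' w') : V') = z q (θ (H.adj_sub hpq) e'')
  conn_h_h : ∀ ⦃p q : V⦄ (hpq : H.Adj p q) (e : ↥(G.neighborSet p)), ¬ H.Adj p ↑e →
      ∀ (h' : G'.Adj (z p e) (z q (θ (H.adj_sub hpq) e)))
        ⦃r : V⦄ (hpr : H.Adj p r)
        (w' : ↥(G'.neighborSet (z p e))), (↑w' : V') = z r (θ (H.adj_sub hpr) e) →
      ∀ (rr : ↥(G.neighborSet p)), (↑rr : V) = r →
      ∀ (s : V), s = ↑(θ (H.adj_sub hpq) rr) →
      ∀ (hqs : H.Adj q s),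
        (↑(θ' h' w') : V') = z s (θ (H.adj_sub hqs) (θ (H.adj_sub hpq) e))
  -- connection along a vertical edge `z^p_e → z^p_{e'}`
  conn_v_t : ∀ ⦃p : V⦄, p ∈ H.verts →
      ∀ (e e' : ↥(G.neighborSet p)), ¬ H.Adj p ↑e → ¬ H.Adj p ↑e' → (↑e : V) ≠ ↑e' →
      ∀ (h' : G'.Adj (z p e) (z p e')) (w' : ↥(G'.neighborSet (z p e))), β ↑w' = ↑e →
        β ↑(θ' h' w') = ↑e'
  conn_v_h : ∀ ⦃p : V⦄, p ∈ H.verts →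
      ∀ (e e' : ↥(G.neighborSet p)), ¬ H.Adj p ↑e → ¬ H.Adj p ↑e' → (↑e : V) ≠ ↑e' →
      ∀ (h' : G'.Adj (z p e) (z p e')) ⦃r : V⦄ (hpr : H.Adj p r)
        (w' : ↥(G'.neighborSet (z p e))), (↑w' : V') = z r (θ (H.adj_sub hpr) e) →
        (↑(θ' h' w') : V') = z r (θ (H.adj_sub hpr) e')
  conn_v_v : ∀ ⦃p : V⦄, p ∈ H.verts →
      ∀ (e e' e'' : ↥(G.neighborSet p)), ¬ H.Adj p ↑e → ¬ H.Adj p ↑e' → ¬ H.Adj p ↑e'' →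
        (↑e : V) ≠ ↑e' → (↑e'' : V) ≠ ↑e → (↑e'' : V) ≠ ↑e' →
      ∀ (h' : G'.Adj (z p e) (z p e')) (w' : ↥(G'.neighborSet (z p e))),
        (↑w' : V') = z p e'' → (↑(θ' h' w') : V') = z p e''
  -- compatibility system
  lam_ns : ∀ ⦃x' y' : V'⦄ (h' : G'.Adj x' y'), β x' ∉ H.verts →
      ∀ (h : G.Adj (β x') (β y')) (w' : ↥(G'.neighborSet x')) (w : ↥(G.neighborSet (β x'))),
        (↑w : V) = β ↑w' → lam' h' w' = lam h w
  lam_t_v : ∀ ⦃p : V⦄, p ∈ H.verts → ∀ (e : ↥(G.neighborSet p)), ¬ H.Adj p ↑e →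
      ∀ ⦃y' : V'⦄ (h' : G'.Adj (z p e) y'), β y' = ↑e →
      ∀ (e'' : ↥(G.neighborSet p)), ¬ H.Adj p ↑e'' → (↑e'' : V) ≠ ↑e →
      ∀ (w' : ↥(G'.neighborSet (z p e))), (↑w' : V') = z p e'' →
        lam' h' w' = lam (nadj e) e''
  lam_t_h : ∀ ⦃p : V⦄, p ∈ H.verts → ∀ (e : ↥(G.neighborSet p)), ¬ H.Adj p ↑e →
      ∀ ⦃y' : V'⦄ (h' : G'.Adj (z p e) y'), β y' = ↑e →
      ∀ ⦃r : V⦄ (hpr : H.Adj p r)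
        (w' : ↥(G'.neighborSet (z p e))), (↑w' : V') = z r (θ (H.adj_sub hpr) e) →
      ∀ (rr : ↥(G.neighborSet p)), (↑rr : V) = r →
        lam' h' w' = lam (nadj e) rr
  lam_h_t : ∀ ⦃p q : V⦄ (hpq : H.Adj p q) (e : ↥(G.neighborSet p)), ¬ H.Adj p ↑e →
      ∀ (h' : G'.Adj (z p e) (z q (θ (H.adj_sub hpq) e)))
        (w' : ↥(G'.neighborSet (z p e))), β ↑w' = ↑e → lam' h' w' = 1
  lam_h_v : ∀ ⦃p q : V⦄ (hpq : H.Adj p q) (e : ↥(G.neighborSet p)), ¬ H.Adj p ↑e →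
      ∀ (h' : G'.Adj (z p e) (z q (θ (H.adj_sub hpq) e)))
        (e'' : ↥(G.neighborSet p)), ¬ H.Adj p ↑e'' → (↑e'' : V) ≠ ↑e →
      ∀ (w' : ↥(G'.neighborSet (z p e))), (↑w' : V') = z p e'' →
        lam' h' w' = lam (H.adj_sub hpq) e''
  lam_h_h : ∀ ⦃p q : V⦄ (hpq : H.Adj p q) (e : ↥(G.neighborSet p)), ¬ H.Adj p ↑e →
      ∀ (h' : G'.Adj (z p e) (z q (θ (H.adj_sub hpq) e)))
        ⦃r : V⦄ (hpr : H.Adj p r)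
        (w' : ↥(G'.neighborSet (z p e))), (↑w' : V') = z r (θ (H.adj_sub hpr) e) →
      ∀ (rr : ↥(G.neighborSet p)), (↑rr : V) = r →
        lam' h' w' = lam (H.adj_sub hpq) rr
  lam_v : ∀ ⦃p : V⦄, p ∈ H.verts →
      ∀ (e e' : ↥(G.neighborSet p)), ¬ H.Adj p ↑e → ¬ H.Adj p ↑e' → (↑e : V) ≠ ↑e' →
      ∀ (h' : G'.Adj (z p e) (z p e')) (w' : ↥(G'.neighborSet (z p e))),
        lam' h' w' = 1

end BlowUp
section Misc

variable {W : Type v} [AddCommGroup W] [Module ℝ W]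

/-- The induced subgraph of `G` on a set of vertices. -/
def inducedSub (G : SimpleGraph V) (s : Set V) : G.Subgraph where
  verts := s
  Adj p q := G.Adj p q ∧ p ∈ s ∧ q ∈ s
  adj_sub := fun h => h.1
  edge_vert := fun h => h.2.1
  symm := ⟨fun _ _ h => ⟨h.1.symm, h.2.2, h.2.1⟩⟩

/-- The graph of the direct product of a graph with the interval. -/
def prodIntervalGraph (G : SimpleGraph V) : SimpleGraph (V × Bool) where
  Adj x y := (x.2 = y.2 ∧ G.Adj x.1 y.1) ∨ (x.1 = y.1 ∧ x.2 ≠ y.2)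
  symm := by
    constructor
    rintro x y (⟨h1, h2⟩ | ⟨h1, h2⟩)
    · exact Or.inl ⟨h1.symm, h2.symm⟩
    · exact Or.inr ⟨h1.symm, Ne.symm h2⟩
  loopless := by
    constructor
    rintro x (⟨_, h⟩ | ⟨_, h⟩)
    · exact G.loopless.irrefl _ h
    · exact h rfl

/-- Specification of the direct product of the generalized 1-skeleton `(G, θ, λ, α)` in `W`
with the interval 1-skeleton `(I, α_I, θ_I, λ_I)` in `ℝ`: the result is the quadruple
`(prodIntervalGraph G, θ', λ', α')` in `W × ℝ`. -/
structure IsIntervalProduct (G : SimpleGraph V) (θ : GraphConn G) (lam : CompatSys G)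
    (α : AxialFn G W) (θ' : GraphConn (prodIntervalGraph G))
    (lam' : CompatSys (prodIntervalGraph G))
    (α' : AxialFn (prodIntervalGraph G) (W × ℝ)) : Prop where
  conn' : IsConnection (prodIntervalGraph G) θ'
  compat' : IsCompatSystem (prodIntervalGraph G) θ' lam'
  alpha_hor : ∀ ⦃x y : V × Bool⦄ (h' : (prodIntervalGraph G).Adj x y) (h : G.Adj x.1 y.1),
      x.2 = y.2 → α' h' = (α h, 0)
  alpha_up : ∀ ⦃x y : V × Bool⦄ (h' : (prodIntervalGraph G).Adj x y),
      x.1 = y.1 → x.2 = false → α' h' = (0, 1)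
  alpha_down : ∀ ⦃x y : V × Bool⦄ (h' : (prodIntervalGraph G).Adj x y),
      x.1 = y.1 → x.2 = true → α' h' = (0, -1)
  conn_hor_hor : ∀ ⦃x y : V × Bool⦄ (h' : (prodIntervalGraph G).Adj x y) (h : G.Adj x.1 y.1),
      x.2 = y.2 → ∀ (w' : ↥((prodIntervalGraph G).neighborSet x)) (w : ↥(G.neighborSet x.1)),
        (↑w' : V × Bool) = (↑w, x.2) → (↑(θ' h' w') : V × Bool) = (↑(θ h w), x.2)
  conn_hor_ver : ∀ ⦃x y : V × Bool⦄ (h' : (prodIntervalGraph G).Adj x y),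
      x.2 = y.2 → ∀ (w' : ↥((prodIntervalGraph G).neighborSet x)),
        (↑w' : V × Bool) = (x.1, !x.2) → (↑(θ' h' w') : V × Bool) = (y.1, !x.2)
  conn_ver_hor : ∀ ⦃x y : V × Bool⦄ (h' : (prodIntervalGraph G).Adj x y),
      x.1 = y.1 → ∀ (w' : ↥((prodIntervalGraph G).neighborSet x)) (w : ↥(G.neighborSet x.1)),
        (↑w' : V × Bool) = (↑w, x.2) → (↑(θ' h' w') : V × Bool) = (↑w, y.2)
  lam_hor_hor : ∀ ⦃x y : V × Bool⦄ (h' : (prodIntervalGraph G).Adj x y) (h : G.Adj x.1 y.1),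
      x.2 = y.2 → ∀ (w' : ↥((prodIntervalGraph G).neighborSet x)) (w : ↥(G.neighborSet x.1)),
        (↑w' : V × Bool) = (↑w, x.2) → lam' h' w' = lam h w
  lam_hor_ver : ∀ ⦃x y : V × Bool⦄ (h' : (prodIntervalGraph G).Adj x y),
      x.2 = y.2 → ∀ (w' : ↥((prodIntervalGraph G).neighborSet x)),
        (↑w' : V × Bool) = (x.1, !x.2) → lam' h' w' = 1
  lam_ver : ∀ ⦃x y : V × Bool⦄ (h' : (prodIntervalGraph G).Adj x y),
      x.1 = y.1 → ∀ (w' : ↥((prodIntervalGraph G).neighborSet x)), lam' h' w' = 1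

end Misc

section Polytope

/-- `(G, A)` is the vertex–edge graph of a simple `d`-polytope `S ⊆ ℝ^d`, with
`A(uv) = v - u` along each oriented edge: `g` identifies the vertices of `G` with the
extreme points of `S = convexHull F`, `S` is full-dimensional, adjacency corresponds to
exposed one-dimensional faces (segments), and `A` is given by differences of vertices. -/
def IsPolytopeSkeleton {d : ℕ} (G : SimpleGraph V) (A : AxialFn G (Fin d → ℝ)) : Prop :=
  ∃ (F : Finset (Fin d → ℝ)) (g : V → (Fin d → ℝ)),
    affineSpan ℝ (convexHull ℝ (F : Set (Fin d → ℝ))) = ⊤ ∧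
    Function.Injective g ∧
    Set.range g = Set.extremePoints ℝ (convexHull ℝ (F : Set (Fin d → ℝ))) ∧
    (∀ p q : V, G.Adj p q ↔ (g p ≠ g q ∧
        IsExposed ℝ (convexHull ℝ (F : Set (Fin d → ℝ))) (segment ℝ (g p) (g q)))) ∧
    (∀ ⦃p q : V⦄ (h : G.Adj p q), A h = g q - g p)

end Polytope

/-! Along a walk in a subskeleton `H`, each step of the transport of a normal edge `e` changes
`α(e)` by (gA2) only up to the factor `λ` and a multiple of the axial vector of the step, which
is tangent to `H`; and the span of the tangent axial vectors does not change along `H`. So if a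
loop at `p` brings `e` back to itself with holonomy number `t`, then `(1 - t) • α(e)` lies in the
tangent span at `p`. For a 2-valent `H` that span is spanned by two axial vectors at `p`, and
3-independence forces `t = 1`. -/

section Level

variable {W : Type v} [AddCommGroup W] [Module ℝ W]
variable {G : SimpleGraph V} {θ : GraphConn G} {lam : CompatSys G} {α : AxialFn G W}
variable {H : G.Subgraph}

/-- The set `E₀ᵖ`; its complement is the set `N₀ᵖ` of normal edges at `p`. -/
def tangentEdges (H : G.Subgraph) (p : V) : Set ↥(G.neighborSet p) :=
  {e | H.Adj p ↑e}

def tangentSpan (α : AxialFn G W) (H : G.Subgraph) (p : V) : Submodule ℝ W :=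
  Submodule.span ℝ ((fun e : ↥(G.neighborSet p) => α (nadj e)) '' tangentEdges H p)

lemma ncard_tangentEdges (H : G.Subgraph) (p : V) :
    (tangentEdges H p).ncard = (H.neighborSet p).ncard :=
  Set.ncard_preimage_of_injective_subset_range Subtype.val_injective
    fun q hq => ⟨⟨q, H.adj_sub hq⟩, rfl⟩

lemma Set.Finite.tangentEdges {p : V} (h : (H.neighborSet p).Finite) :
    (tangentEdges H p).Finite :=
  h.preimage Subtype.val_injective.injOn

lemma walkIn_cons_iff {p q r : V} (h : G.Adj p q) (w : G.Walk q r) :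
    WalkIn H (.cons h w) ↔ H.Adj p q ∧ WalkIn H w := by
  simp [WalkIn, SimpleGraph.Walk.darts_cons]

lemma mem_tangentSpan {p : V} {e : ↥(G.neighborSet p)} (he : H.Adj p ↑e) :
    α (nadj e) ∈ tangentSpan α H p :=
  Submodule.subset_span ⟨e, he, rfl⟩

/-- `θ_pq` injects the tangent edges at `p` into the equally many tangent edges at `q`, so it
cannot send a normal edge to a tangent one. -/
lemma IsSubskeleton.not_adj_conn_of_not_adj (hsub : IsSubskeleton θ H)
    (hfin : ∀ p ∈ H.verts, (H.neighborSet p).Finite) {p q : V} (h : H.Adj p q)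
    {e : ↥(G.neighborSet p)} (he : ¬ H.Adj p ↑e) :
    ¬ H.Adj q ↑(θ (H.adj_sub h) e) := by
  obtain ⟨k, hk⟩ := hsub.regular
  have hsubset : θ (H.adj_sub h) '' tangentEdges H p ⊆ tangentEdges H q := by
    rintro _ ⟨e', he', rfl⟩
    exact hsub.geodesic h e' he'
  have hcard : (tangentEdges H q).ncard ≤ (θ (H.adj_sub h) '' tangentEdges H p).ncard := by
    rw [Set.ncard_image_of_injective _ (θ _).injective, ncard_tangentEdges, ncard_tangentEdges,
      hk p (H.edge_vert h), hk q (H.edge_vert h.symm)]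
  have himage := Set.eq_of_subset_of_ncard_le hsubset hcard
    (hfin q (H.edge_vert h.symm)).tangentEdges
  intro hθe
  have hθe' : θ (H.adj_sub h) e ∈ θ (H.adj_sub h) '' tangentEdges H p := himage ▸ hθe
  exact he ((θ _).injective.mem_set_image.1 hθe')

lemma IsGenAxial.mem_tangentSpan_target (hα : IsGenAxial G θ lam α) {p q : V}
    (h : H.Adj p q) : α (H.adj_sub h) ∈ tangentSpan α H q := by
  obtain ⟨m, -, hm⟩ := hα.1 (H.adj_sub h)
  rw [hm]
  exact neg_mem <| Submodule.smul_mem _ _ <|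
    mem_tangentSpan (e := ⟨p, (H.adj_sub h).symm⟩) h.symm

/-- By (gA2), the axial vector of a tangent edge at `p` is a combination of `α(pq)` and of a
tangent axial vector at `q`. -/
lemma IsGenAxial.tangentSpan_le (hα : IsGenAxial G θ lam α) (hsub : IsSubskeleton θ H)
    {p q : V} (h : H.Adj p q) : tangentSpan α H p ≤ tangentSpan α H q := by
  rw [tangentSpan, Submodule.span_le]
  rintro _ ⟨⟨r, hr⟩, he, rfl⟩
  by_cases hrq : r = q
  · subst hrq
    exact hα.mem_tangentSpan_target h
  · obtain ⟨c, hc⟩ := hα.2 (H.adj_sub h) ⟨r, hr⟩ hrq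
    rw [sub_eq_iff_eq_add] at hc
    change α (nadj ⟨r, hr⟩) ∈ tangentSpan α H q
    rw [hc]
    exact add_mem (Submodule.smul_mem _ _ (hα.mem_tangentSpan_target h))
      (Submodule.smul_mem _ _ (mem_tangentSpan (hsub.geodesic h _ he)))

lemma IsGenAxial.sub_transNum_smul_mem_tangentSpan (hα : IsGenAxial G θ lam α)
    (hsub : IsSubskeleton θ H) (hfin : ∀ p ∈ H.verts, (H.neighborSet p).Finite) {p q : V}
    (w : G.Walk p q) (hw : WalkIn H w) (e : ↥(G.neighborSet p)) (he : ¬ H.Adj p ↑e) :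
    α (nadj e) - transNum θ lam w e • α (nadj (transport θ w e)) ∈ tangentSpan α H p := by
  induction w with
  | nil => simp [transport, transNum]
  | @cons a b c hab w ih =>
    obtain ⟨hH, hw⟩ := (walkIn_cons_iff hab w).1 hw
    have heb : (↑e : V) ≠ b := fun heb => he (heb ▸ hH)
    obtain ⟨d, hd⟩ := hα.2 hab e heb
    have hrest := ih hw (θ hab e) (hsub.not_adj_conn_of_not_adj hfin hH he)
    have hsplit : α (nadj e) - (lam hab e * transNum θ lam w (θ hab e)) •
          α (nadj (transport θ w (θ hab e))) =
        d • α hab + lam hab e • (α (nadj (θ hab e)) -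
          transNum θ lam w (θ hab e) • α (nadj (transport θ w (θ hab e)))) := by
      rw [← hd]
      module
    simp only [transport, transNum]
    rw [hsplit]
    exact add_mem (Submodule.smul_mem _ _ (mem_tangentSpan (e := ⟨b, hab⟩) hH))
      (Submodule.smul_mem _ _ (hα.tangentSpan_le hsub hH.symm hrest))

lemma kIndep.notMem_span_image {k : ℕ} (hk : kIndep G α k) {p : V}
    {s : Set ↥(G.neighborSet p)} (hs : s.Finite) (hcard : s.ncard + 1 = k)
    {e : ↥(G.neighborSet p)} (he : e ∉ s) :
    α (nadj e) ∉ Submodule.span ℝ ((fun e : ↥(G.neighborSet p) => α (nadj e)) '' s) := by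
  classical
  have hindep : LinearIndepOn ℝ (fun e : ↥(G.neighborSet p) => α (nadj e))
      ↑(insert e hs.toFinset) := hk p _ (by
    rw [Finset.card_insert_of_notMem (by simpa using he), ← Set.ncard_eq_toFinset_card s hs,
      hcard])
  rw [Finset.coe_insert, Set.Finite.coe_toFinset] at hindep
  exact ((linearIndepOn_insert he).1 hindep).2

end Level

theorem every_two_valent_subskeleton_of_three_independent_is_level_general
    {V : Type u} {n : ℕ}
    (G : SimpleGraph V) (θ : GraphConn G) (lam : CompatSys G)
    (α : AxialFn G (Fin n → ℝ))
    (hsk : IsOneSkeleton G θ lam α) (h3 : kIndep G α 3) :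
    ∀ H : G.Subgraph, IsSubskeleton θ H →
      (∀ p ∈ H.verts, (H.neighborSet p).ncard = 2) →
      LevelSub θ lam H := by
  intro H hsub hval p w hw e he hloop
  cases w with
  | nil => rfl
  | cons hab w =>
    have hp : p ∈ H.verts := H.edge_vert ((walkIn_cons_iff hab w).1 hw).1
    have hfin : ∀ q ∈ H.verts, (H.neighborSet q).Finite := fun q hq =>
      Set.finite_of_ncard_ne_zero (by rw [hval q hq]; norm_num)
    have hmem := hsk.1.axial.sub_transNum_smul_mem_tangentSpan hsub hfin _ hw e he
    rw [hloop] at hmem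
    set t := transNum θ lam (.cons hab w) e
    have hmem' : (1 - t) • α (nadj e) ∈ tangentSpan α H p := by rwa [sub_smul, one_smul]
    have hnormal : α (nadj e) ∉ tangentSpan α H p :=
      h3.notMem_span_image (s := tangentEdges H p) (hfin p hp).tangentEdges
        (by rw [ncard_tangentEdges, hval p hp]) he
    by_contra hne
    exact hnormal ((Submodule.smul_mem_iff _ (sub_ne_zero.2 (Ne.symm hne))).1 hmem')

/-- In a 3-independent 1-skeleton, every 2-valent subskeleton is level. -/
theorem every_two_valent_subskeleton_of_three_independent_is_level
    {V : Type u} [Fintype V] {n : ℕ}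
    (G : SimpleGraph V) (θ : GraphConn G) (lam : CompatSys G)
    (α : AxialFn G (Fin n → ℝ))
    (hsk : IsOneSkeleton G θ lam α) (h3 : kIndep G α 3) :
    ∀ H : G.Subgraph, IsSubskeleton θ H →
      (∀ p ∈ H.verts, (H.neighborSet p).ncard = 2) →
      LevelSub θ lam H :=
  every_two_valent_subskeleton_of_three_independent_is_level_general G θ lam α hsk h3
end

section
/- Let (Γ, α, θ) be a 1-skeleton in ℝ^n and let H ⊆ ℝ^n be a linear subspace. Then every connected component Γ_H of the subgraph of Γ whose edges are those e with α(e) ∈ H is totally geodesic — i.e. for every oriented edge e of Γ_H, θ_e maps the oriented edges of Γ_H at i(e) onto the oriented edges of Γ_H at t(e) — and Γ_H has constant valency; in particular Γ_H with the restricted data is a subskeleton. -/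
open SimpleGraph

universe u u' v

variable {V : Type u}

/-! By (gA2), `α(θ_e e') = λ_e(e')⁻¹ • (α(e') - c • α(e))`, and by (gA1) `α(ē)` is a multiple of
`α(e)`. Hence, when `α(e) ∈ H`, the connection `θ_e` maps the oriented edges at `i(e)` with axial
vector in `H` into those at `t(e)`, and bijectively onto them since `θ_ē = θ_e⁻¹`. This is total
geodesy, and it shows that the valency of the slice graph is constant along its edges, hence on
each connected component. -/

theorem SimpleGraph.Reachable.eq_of_forall_adj {V β : Type*} {G : SimpleGraph V} {f : V → β}
    (hf : ∀ ⦃p q : V⦄, G.Adj p q → f p = f q) {p q : V} (h : G.Reachable p q) : f p = f q := by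
  rw [reachable_iff_reflTransGen] at h
  induction h with
  | refl => rfl
  | tail _ hadj ih => exact ih.trans (hf hadj)

section Slice

variable {V : Type u} {W : Type v} [AddCommGroup W] [Module ℝ W] {G : SimpleGraph V}
  {θ : GraphConn G} {lam : CompatSys G} {α : AxialFn G W} {Hs : Submodule ℝ W}

theorem IsGenAxial.symm_mem (hα : IsGenAxial G θ lam α) {p q : V} (h : G.Adj p q)
    (hh : α h ∈ Hs) : α h.symm ∈ Hs := by
  obtain ⟨m, -, hm⟩ := hα.1 h.symm
  rw [hm]
  exact Hs.neg_mem (Hs.smul_mem m hh)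

theorem IsGenAxial.connection_mem (hθ : IsConnection G θ) (hlam : IsCompatSystem G θ lam)
    (hα : IsGenAxial G θ lam α) {p q : V} (h : G.Adj p q) (hh : α h ∈ Hs)
    {e : ↥(G.neighborSet p)} (he : α (nadj e) ∈ Hs) : α (nadj (θ h e)) ∈ Hs := by
  by_cases heq : (e : V) = q
  · obtain rfl : e = ⟨q, h⟩ := Subtype.ext heq
    rw [hθ.1 h]
    exact hα.symm_mem h hh
  · obtain ⟨c, hc⟩ := hα.2 h e heq
    have hθe : α (nadj (θ h e)) = (lam h e)⁻¹ • (α (nadj e) - c • α h) := by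
      rw [← hc, sub_sub_cancel, inv_smul_smul₀ (hlam.1 h e).ne']
    rw [hθe]
    exact Hs.smul_mem _ (Hs.sub_mem he (Hs.smul_mem c hh))

theorem IsGenAxial.image_connection_setOf_mem (hθ : IsConnection G θ)
    (hlam : IsCompatSystem G θ lam) (hα : IsGenAxial G θ lam α) {p q : V} (h : G.Adj p q)
    (hh : α h ∈ Hs) :
    θ h '' {e | α (nadj e) ∈ Hs} = {e | α (nadj e) ∈ Hs} := by
  refine Set.Subset.antisymm ?_ fun e he => ⟨θ h.symm e, ?_, ?_⟩
  · rintro _ ⟨e, he, rfl⟩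
    exact hα.connection_mem hθ hlam h hh he
  · exact hα.connection_mem hθ hlam h.symm (hα.symm_mem h hh) he
  · rw [hθ.2 h, Equiv.apply_symm_apply]

theorem sliceGraph_adj_iff (hα : IsGenAxial G θ lam α) {p q : V} :
    (sliceGraph G α Hs).Adj p q ↔ ∃ h : G.Adj p q, α h ∈ Hs :=
  ⟨fun ⟨h, hh, _⟩ => ⟨h, hh⟩, fun ⟨h, hh⟩ => ⟨h, hh, hα.symm_mem h hh⟩⟩

theorem sliceGraph_neighborSet_eq_image (hα : IsGenAxial G θ lam α) (p : V) :
    (sliceGraph G α Hs).neighborSet p =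
      Subtype.val '' {e : ↥(G.neighborSet p) | α (nadj e) ∈ Hs} := by
  ext q
  rw [mem_neighborSet, sliceGraph_adj_iff hα]
  exact ⟨fun ⟨h, hh⟩ => ⟨⟨q, h⟩, hh, rfl⟩, fun ⟨e, he, heq⟩ => heq ▸ ⟨e.2, he⟩⟩

theorem sliceGraph_adj_connection (hθ : IsConnection G θ) (hlam : IsCompatSystem G θ lam)
    (hα : IsGenAxial G θ lam α) {p q : V} (h : G.Adj p q) (hh : α h ∈ Hs)
    {e : ↥(G.neighborSet p)} (he : (sliceGraph G α Hs).Adj p e) :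
    (sliceGraph G α Hs).Adj q (θ h e) :=
  (sliceGraph_adj_iff hα).2 ⟨nadj _, hα.connection_mem hθ hlam h hh he.choose_spec.1⟩

theorem sliceGraph_ncard_neighborSet_eq_of_adj (hθ : IsConnection G θ)
    (hlam : IsCompatSystem G θ lam) (hα : IsGenAxial G θ lam α) ⦃p q : V⦄
    (hpq : (sliceGraph G α Hs).Adj p q) :
    ((sliceGraph G α Hs).neighborSet p).ncard = ((sliceGraph G α Hs).neighborSet q).ncard := by
  obtain ⟨h, hh, -⟩ := hpq
  rw [sliceGraph_neighborSet_eq_image hα, sliceGraph_neighborSet_eq_image hα,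
    ← hα.image_connection_setOf_mem hθ hlam h hh,
    Set.ncard_image_of_injective _ Subtype.val_injective,
    Set.ncard_image_of_injective _ Subtype.val_injective,
    Set.ncard_image_of_injective _ (θ h).injective]

theorem sliceComponent_adj_iff {v p q : V} (hp : p ∈ (sliceComponent G α Hs v).verts) :
    (sliceComponent G α Hs v).Adj p q ↔ (sliceGraph G α Hs).Adj p q :=
  ⟨fun h => h.1, fun h => ⟨h, hp, hp.trans h.reachable⟩⟩

theorem sliceComponent_neighborSet {v p : V} (hp : p ∈ (sliceComponent G α Hs v).verts) :
    (sliceComponent G α Hs v).neighborSet p = (sliceGraph G α Hs).neighborSet p :=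
  Set.ext fun _ => sliceComponent_adj_iff hp

theorem sliceComponent_connected (v : V) : (sliceComponent G α Hs v).Connected := by
  let C := (sliceGraph G α Hs).connectedComponentMk v
  have hsupp : ∀ {w}, w ∈ C.supp ↔ (sliceGraph G α Hs).Reachable v w := by
    intro w
    rw [ConnectedComponent.mem_supp_iff, ConnectedComponent.eq, reachable_comm]
  let f : C.toSimpleGraph →g (sliceComponent G α Hs v).coe :=
    { toFun := fun w => ⟨w, hsupp.1 w.2⟩
      map_rel' := fun {a b} h => ⟨h, hsupp.1 a.2, hsupp.1 b.2⟩ }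
  exact ⟨C.connected_toSimpleGraph.map f fun w => ⟨⟨w, hsupp.2 w.2⟩, rfl⟩⟩

end Slice

theorem slice_components_are_subskeleta_general
    {V : Type u} {n : ℕ}
    (G : SimpleGraph V) (θ : GraphConn G) (lam : CompatSys G)
    (α : AxialFn G (Fin n → ℝ))
    (hsk : IsOneSkeleton G θ lam α) :
    ∀ (Hs : Submodule ℝ (Fin n → ℝ)) (v : V),
      (∀ ⦃p q : V⦄ (h : (sliceComponent G α Hs v).Adj p q) (e : ↥(G.neighborSet p)),
        (sliceComponent G α Hs v).Adj p ↑e →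
        (sliceComponent G α Hs v).Adj q ↑(θ ((sliceComponent G α Hs v).adj_sub h) e)) ∧
      (∃ k : ℕ, ∀ p ∈ (sliceComponent G α Hs v).verts,
        ((sliceComponent G α Hs v).neighborSet p).ncard = k) ∧
      IsSubskeleton θ (sliceComponent G α Hs v) := by
  intro Hs v
  obtain ⟨⟨-, hθ, hlam, hα⟩, -⟩ := hsk
  have regular : ∀ p ∈ (sliceComponent G α Hs v).verts,
      ((sliceComponent G α Hs v).neighborSet p).ncard =
        ((sliceGraph G α Hs).neighborSet v).ncard := fun p hp => by
    rw [sliceComponent_neighborSet hp]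
    exact (hp.eq_of_forall_adj (sliceGraph_ncard_neighborSet_eq_of_adj hθ hlam hα)).symm
  have hsub : IsSubskeleton θ (sliceComponent G α Hs v) :=
    { connected := sliceComponent_connected v
      regular := ⟨_, regular⟩
      geodesic := fun _ _ h _ he => (sliceComponent_adj_iff h.2.2).2
        (sliceGraph_adj_connection hθ hlam hα _ h.1.choose_spec.1 he.1) }
  exact ⟨hsub.geodesic, hsub.regular, hsub⟩

/-- Every connected component of the subgraph of a 1-skeleton whose edges have
axial vectors in a subspace `Hs` is totally geodesic with constant valency — in particular a
subskeleton (`IsSubskeleton` packages connectivity, constant valency and total geodesy). -/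
theorem slice_components_are_subskeleta
    {V : Type u} [Fintype V] {n : ℕ}
    (G : SimpleGraph V) (θ : GraphConn G) (lam : CompatSys G)
    (α : AxialFn G (Fin n → ℝ))
    (hsk : IsOneSkeleton G θ lam α) :
    ∀ (Hs : Submodule ℝ (Fin n → ℝ)) (v : V),
      (∀ ⦃p q : V⦄ (h : (sliceComponent G α Hs v).Adj p q) (e : ↥(G.neighborSet p)),
        (sliceComponent G α Hs v).Adj p ↑e →
        (sliceComponent G α Hs v).Adj q ↑(θ ((sliceComponent G α Hs v).adj_sub h) e)) ∧
      (∃ k : ℕ, ∀ p ∈ (sliceComponent G α Hs v).verts,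
        ((sliceComponent G α Hs v).neighborSet p).ncard = k) ∧
      IsSubskeleton θ (sliceComponent G α Hs v) :=
  slice_components_are_subskeleta_general G θ lam α hsk
end

section
/- Let (Γ, α, θ) be a d-valent d-independent 1-skeleton in ℝ^d that is pointed, and for each vertex p let X_p = {u ∈ (ℝ^d)* : ⟨u, α(e)⟩ ≥ 0 for all e ∈ E^p}. Then the cones X_p cover the dual space: ⋃_{p ∈ V_Γ} X_p = (ℝ^d)*. -/
open SimpleGraph

universe u u' v

variable {V : Type u}

/-- The polyhedral cone `X_p` dual to the axial vectors at `p`. -/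
def XCone {V : Type u} {d : ℕ} (G : SimpleGraph V) (α : AxialFn G (Fin d → ℝ)) (p : V) :
    Set ((Fin d → ℝ) →ₗ[ℝ] ℝ) :=
  {u | ∀ ⦃q : V⦄ (h : G.Adj p q), 0 ≤ u (α h)}

/-! Perturb `u` to `u + t • η`, where `η` is nonzero on every axial vector and `t > 0` is small:
the perturbed covector is generic, and it is positive on an axial vector only where `u` is
nonnegative. So the unique source `p` of the perturbed covector satisfies `u ∈ X_p`. -/

open Filter Topology

theorem eventually_nhdsGT_add_mul_ne_zero_and_nonneg {x y : ℝ} (hy : y ≠ 0) :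
    ∀ᶠ t in 𝓝[>] 0, x + t * y ≠ 0 ∧ (0 < x + t * y → 0 ≤ x) := by
  have hlim : Tendsto (fun t => x + t * y) (𝓝[>] 0) (𝓝 x) :=
    ((continuous_const.add (continuous_id.mul continuous_const)).tendsto' 0 x
      (by simp)).mono_left nhdsWithin_le_nhds
  rcases lt_trichotomy x 0 with hx | rfl | hx
  · filter_upwards [hlim.eventually (gt_mem_nhds hx)] with t ht
    exact ⟨ht.ne, fun h => absurd h ht.not_gt⟩
  · filter_upwards [self_mem_nhdsWithin] with t (ht : 0 < t)
    exact ⟨by simp [ht.ne', hy], fun _ => le_rfl⟩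
  · filter_upwards [hlim.eventually (lt_mem_nhds hx)] with t ht
    exact ⟨ht.ne', fun _ => hx.le⟩

theorem exists_dual_forall_ne_zero_and_nonneg_of_pos {E ι : Type*} [AddCommGroup E]
    [Module ℝ E] [Finite ι] {v : ι → E} (hv : ∀ i, v i ≠ 0) (u : E →ₗ[ℝ] ℝ) :
    ∃ ξ : E →ₗ[ℝ] ℝ, ∀ i, ξ (v i) ≠ 0 ∧ (0 < ξ (v i) → 0 ≤ u (v i)) := by
  obtain ⟨η, hη⟩ := Module.exists_dual_forall_apply_ne_zero (K := ℝ) v hv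
  obtain ⟨t, ht⟩ := (eventually_all.2 fun i =>
    eventually_nhdsGT_add_mul_ne_zero_and_nonneg (x := u (v i)) (hη i)).exists
  exact ⟨u + t • η, fun i => by simpa using ht i⟩

theorem kIndep.axial_ne_zero {V W : Type*} [Finite V] [AddCommGroup W] [Module ℝ W]
    {G : SimpleGraph V} {α : AxialFn G W} {d : ℕ} (hind : kIndep G α d) (hd : Valency G d)
    {p q : V} (h : G.Adj p q) : α h ≠ 0 := by
  classical
  have : Fintype (G.neighborSet p) := Fintype.ofFinite _
  have hcard : (Finset.univ : Finset (G.neighborSet p)).card = d := by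
    rw [Finset.card_univ, ← Nat.card_eq_fintype_card, Nat.card_coe_set_eq, hd p]
  exact (hind p Finset.univ hcard).ne_zero ⟨⟨q, h⟩, Finset.mem_coe.2 (Finset.mem_univ _)⟩

theorem cones_of_pointed_skeleton_cover_dual_general
    {V : Type u} [Fintype V] {d : ℕ}
    (G : SimpleGraph V)
    (α : AxialFn G (Fin d → ℝ))
    (hd : Valency G d) (hind : kIndep G α d)
    (hpt : PointedSkel G α) :
    ⋃ p : V, XCone G α p = Set.univ := by
  refine Set.eq_univ_of_forall fun u => ?_
  obtain ⟨ξ, hξ⟩ := exists_dual_forall_ne_zero_and_nonneg_of_pos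
    (v := fun e : {e : V × V // G.Adj e.1 e.2} => α e.2) (fun e => hind.axial_ne_zero hd e.2) u
  obtain ⟨p, hp, -⟩ := hpt ξ fun p q h => (hξ ⟨(p, q), h⟩).1
  exact Set.mem_iUnion.2 ⟨p, fun q h => (hξ ⟨(p, q), h⟩).2 (hp h)⟩

/-- For a pointed `d`-valent `d`-independent 1-skeleton in `ℝ^d`, the cones
`X_p = {u : ⟨u, α(e)⟩ ≥ 0 for all e ∈ E^p}` cover the dual space. -/
theorem cones_of_pointed_skeleton_cover_dual
    {V : Type u} [Fintype V] {d : ℕ}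
    (G : SimpleGraph V) (θ : GraphConn G) (lam : CompatSys G)
    (α : AxialFn G (Fin d → ℝ))
    (hsk : IsOneSkeleton G θ lam α) (hd : Valency G d) (hind : kIndep G α d)
    (hpt : PointedSkel G α) :
    ⋃ p : V, XCone G α p = Set.univ :=
  cones_of_pointed_skeleton_cover_dual_general G α hd hind hpt
end
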